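/- Let Ω ⊂ ℂⁿ be a bounded domain with a smooth negative plurisubharmonic function φ with φ(z) → 0 as z → ∂Ω, let ψ be a smooth strictly plurisubharmonic function on a neighborhood of the closure of Ω, and let φ̂ = -log(-φ). Then ω = i∂∂̄((1/(2n))ψ + φ̂) is a complete Kähler metric on Ω. -/

import Mathlib

set_option maxHeartbeats 1000000


open MeasureTheory Metric Set

/-- Second derivative at 0 of the restriction of `φ` to the real line `s ↦ z + s•v`. -/
noncomputable def lineD2 {n : ℕ} (φ : (Fin n → ℂ) → ℝ) (z v : Fin n → ℂ) : ℝ :=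
  deriv (deriv (fun s : ℝ => φ (z + s • v))) 0

/-- `4·(Levi form of φ at z)(v,v)`: the Laplacian at `λ = 0` of `λ ↦ φ(z + λ v)`, `λ ∈ ℂ`. -/
noncomputable def leviQ {n : ℕ} (φ : (Fin n → ℂ) → ℝ) (z v : Fin n → ℂ) : ℝ :=
  lineD2 φ z v + lineD2 φ z (Complex.I • v)

/-- `2·∂φ(v)`: twice the Wirtinger derivative of `φ` at `z` in direction `v`. -/
noncomputable def wirt {n : ℕ} (φ : (Fin n → ℂ) → ℝ) (z v : Fin n → ℂ) : ℂ :=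
  ((lineDeriv ℝ φ z v : ℝ) : ℂ) - Complex.I * ((lineDeriv ℝ φ z (Complex.I • v) : ℝ) : ℂ)

/-- Length of a path `γ : [0,1] → ℂⁿ` with respect to the Hermitian metric whose squared
norm of a tangent vector `v` at `z` is `H z v`. -/
noncomputable def pathLen {n : ℕ} (H : (Fin n → ℂ) → (Fin n → ℂ) → ℝ)
    (γ : ℝ → (Fin n → ℂ)) : ℝ :=
  ∫ t in (0:ℝ)..1, Real.sqrt (H (γ t) (deriv γ t))

/-- Geodesic distance in `Ω` associated to the metric `H`. -/
noncomputable def wDist {n : ℕ} (Ω : Set (Fin n → ℂ))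
    (H : (Fin n → ℂ) → (Fin n → ℂ) → ℝ) (x y : Fin n → ℂ) : ℝ :=
  sInf {L : ℝ | ∃ γ : ℝ → (Fin n → ℂ), ContDiff ℝ 1 γ ∧ γ 0 = x ∧ γ 1 = y ∧
    (∀ t ∈ Set.Icc (0:ℝ) 1, γ t ∈ Ω) ∧ L = pathLen H γ}


open scoped ContDiff

namespace S4
variable {n : ℕ}
abbrev E (n : ℕ) := Fin n → ℂ

lemma hasDerivAt_line (z v : E n) (s : ℝ) :
    HasDerivAt (fun t : ℝ => z + t • v) v s := by
  simpa using ((hasDerivAt_id s).smul_const v).const_add z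

lemma lineD2_zero (f : (E n) → ℝ) (z : E n) : lineD2 f z 0 = 0 := by
  have h : (fun s : ℝ => f (z + s • (0 : E n))) = fun _ => f z := by
    funext s; simp
  simp [lineD2, h]

lemma leviQ_zero (f : (E n) → ℝ) (z : E n) : leviQ f z 0 = 0 := by
  simp [leviQ, lineD2_zero]

lemma lineD2_eq {f : E n → ℝ} {s : Set (E n)} (hs : IsOpen s) (hf : ContDiffOn ℝ 2 f s)
    {z : E n} (hz : z ∈ s) (v : E n) :
    lineD2 f z v = fderiv ℝ (fderiv ℝ f) z v v ∧ lineDeriv ℝ f z v = fderiv ℝ f z v := by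
  set L : ℝ → E n := fun t => z + t • v with hL
  have hIopen : IsOpen (L ⁻¹' s) := hs.preimage (by fun_prop)
  have h0 : (0 : ℝ) ∈ L ⁻¹' s := by simp [hL, hz]
  have hd1 : ∀ t ∈ L ⁻¹' s, HasDerivAt (fun r : ℝ => f (z + r • v))
      (fderiv ℝ f (L t) v) t := by
    intro t ht
    have hdf : DifferentiableAt ℝ f (L t) :=
      ((hf.differentiableOn (by norm_num)).differentiableAt (hs.mem_nhds ht))
    simpa [hL, Function.comp_def] using hdf.hasFDerivAt.comp_hasDerivAt t (hasDerivAt_line z v t)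
  have hderiv_eq : deriv (fun r : ℝ => f (z + r • v)) =ᶠ[nhds (0:ℝ)]
      fun t => fderiv ℝ f (L t) v := by
    filter_upwards [hIopen.mem_nhds h0] with t ht
    exact (hd1 t ht).deriv
  constructor
  · have h2 : HasDerivAt (fun t : ℝ => fderiv ℝ f (L t) v)
        (fderiv ℝ (fderiv ℝ f) z v v) 0 := by
      have hdf2 : DifferentiableAt ℝ (fderiv ℝ f) z :=
        ((hf.fderiv_of_isOpen hs (m := 1) (by norm_num)).differentiableOn one_ne_zero).differentiableAt
          (hs.mem_nhds hz)
      have hc : HasDerivAt (fun t : ℝ => fderiv ℝ f (L t))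
          (fderiv ℝ (fderiv ℝ f) z v) 0 := by
        have h0' : HasFDerivAt (fderiv ℝ f) (fderiv ℝ (fderiv ℝ f) z) (z + (0:ℝ) • v) := by
          simpa using hdf2.hasFDerivAt
        have := h0'.comp_hasDerivAt 0 (hasDerivAt_line z v 0)
        simpa [hL, Function.comp_def] using this
      simpa using hc.clm_apply (hasDerivAt_const 0 v)
    rw [lineD2, hderiv_eq.deriv_eq]
    exact h2.deriv
  · have := (hd1 0 h0).deriv
    simpa [lineDeriv, hL] using this

lemma leviQ_eq {f : E n → ℝ} {s : Set (E n)} (hs : IsOpen s) (hf : ContDiffOn ℝ 2 f s)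
    {z : E n} (hz : z ∈ s) (v : E n) :
    leviQ f z v = fderiv ℝ (fderiv ℝ f) z v v
      + fderiv ℝ (fderiv ℝ f) z (Complex.I • v) (Complex.I • v) := by
  rw [leviQ, (lineD2_eq hs hf hz v).1, (lineD2_eq hs hf hz _).1]

lemma leviQ_smul {f : E n → ℝ} {s : Set (E n)} (hs : IsOpen s) (hf : ContDiffOn ℝ 2 f s)
    {z : E n} (hz : z ∈ s) (v : E n) (c : ℝ) :
    leviQ f z (c • v) = c ^ 2 * leviQ f z v := by
  have hIc : Complex.I • (c • v) = c • (Complex.I • v) := smul_comm _ _ _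
  rw [leviQ_eq hs hf hz, leviQ_eq hs hf hz, hIc]
  simp [ContinuousLinearMap.map_smul, ContinuousLinearMap.smul_apply, smul_eq_mul]
  ring

lemma leviQ_contOn {f : E n → ℝ} {s : Set (E n)} (hs : IsOpen s) (hf : ContDiffOn ℝ 2 f s) :
    ContinuousOn (fun p : E n × E n => leviQ f p.1 p.2) (s ×ˢ (univ : Set (E n))) := by
  have hB : ContinuousOn (fderiv ℝ (fderiv ℝ f)) s :=
    (hf.fderiv_of_isOpen hs le_rfl).continuousOn_fderiv_of_isOpen hs le_rfl
  have hfst : ContinuousOn (fun p : E n × E n => fderiv ℝ (fderiv ℝ f) p.1)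
      (s ×ˢ (univ : Set (E n))) :=
    hB.comp continuousOn_fst (fun p hp => hp.1)
  have hsnd : ContinuousOn (fun p : E n × E n => p.2) (s ×ˢ (univ : Set (E n))) :=
    continuousOn_snd
  have h1 : ContinuousOn (fun p : E n × E n => fderiv ℝ (fderiv ℝ f) p.1 p.2 p.2)
      (s ×ˢ (univ : Set (E n))) := (hfst.clm_apply hsnd).clm_apply hsnd
  have h2 : ContinuousOn
      (fun p : E n × E n => fderiv ℝ (fderiv ℝ f) p.1 (Complex.I • p.2) (Complex.I • p.2))
      (s ×ˢ (univ : Set (E n))) :=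
    (hfst.clm_apply (hsnd.const_smul Complex.I)).clm_apply (hsnd.const_smul Complex.I)
  exact (h1.add h2).congr (fun p hp => leviQ_eq hs hf hp.1 p.2)


/-- Packaged line-restriction facts for a `C²` function on an open set. -/
lemma line_pack {f : E n → ℝ} {s : Set (E n)} (hs : IsOpen s) (hf : ContDiffOn ℝ 2 f s)
    {z : E n} (hz : z ∈ s) (v : E n) :
    (∀ᶠ t in nhds (0:ℝ), z + t • v ∈ s ∧
        HasDerivAt (fun r : ℝ => f (z + r • v)) (fderiv ℝ f (z + t • v) v) t)
    ∧ HasDerivAt (fun t : ℝ => fderiv ℝ f (z + t • v) v) (lineD2 f z v) 0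
    ∧ fderiv ℝ f z v = lineDeriv ℝ f z v := by
  set L : ℝ → E n := fun t => z + t • v with hL
  have hIopen : IsOpen (L ⁻¹' s) := hs.preimage (by fun_prop)
  have h0 : (0 : ℝ) ∈ L ⁻¹' s := by simp [hL, hz]
  have hd1 : ∀ t ∈ L ⁻¹' s, HasDerivAt (fun r : ℝ => f (z + r • v))
      (fderiv ℝ f (L t) v) t := by
    intro t ht
    have hdf : DifferentiableAt ℝ f (L t) :=
      ((hf.differentiableOn (by norm_num)).differentiableAt (hs.mem_nhds ht))
    simpa [hL, Function.comp_def] using hdf.hasFDerivAt.comp_hasDerivAt t (hasDerivAt_line z v t)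
  have hEv : ∀ᶠ t in nhds (0:ℝ), z + t • v ∈ s ∧
      HasDerivAt (fun r : ℝ => f (z + r • v)) (fderiv ℝ f (z + t • v) v) t := by
    filter_upwards [hIopen.mem_nhds h0] with t ht
    exact ⟨ht, hd1 t ht⟩
  refine ⟨hEv, ?_, ?_⟩
  · have hderiv_eq : deriv (fun r : ℝ => f (z + r • v)) =ᶠ[nhds (0:ℝ)]
        fun t => fderiv ℝ f (L t) v := by
      filter_upwards [hIopen.mem_nhds h0] with t ht
      exact (hd1 t ht).deriv
    have hdf2 : DifferentiableAt ℝ (fderiv ℝ f) z :=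
      ((hf.fderiv_of_isOpen hs (m := 1) (by norm_num)).differentiableOn one_ne_zero).differentiableAt
        (hs.mem_nhds hz)
    have hc : HasDerivAt (fun t : ℝ => fderiv ℝ f (L t))
        (fderiv ℝ (fderiv ℝ f) z v) 0 := by
      have h0' : HasFDerivAt (fderiv ℝ f) (fderiv ℝ (fderiv ℝ f) z) (z + (0:ℝ) • v) := by
        simpa using hdf2.hasFDerivAt
      simpa [hL, Function.comp_def] using h0'.comp_hasDerivAt 0 (hasDerivAt_line z v 0)
    have h2 : HasDerivAt (fun t : ℝ => fderiv ℝ f (L t) v)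
        (fderiv ℝ (fderiv ℝ f) z v v) 0 := by
      simpa using hc.clm_apply (hasDerivAt_const 0 v)
    have : lineD2 f z v = fderiv ℝ (fderiv ℝ f) z v v := by
      rw [lineD2, hderiv_eq.deriv_eq]; exact h2.deriv
    rw [this]; exact h2
  · have := (hd1 0 h0).deriv
    rw [lineDeriv]
    simp only [hL, zero_smul, add_zero] at this ⊢
    exact this.symm

/-- Line facts for the function `φ̂ = -log(-φ)` and the combination. -/
lemma hat_line {Ω : Set (E n)} {φ : E n → ℝ} (hΩ : IsOpen Ω)
    (hφ : ContDiffOn ℝ 2 φ Ω) (hneg : ∀ z ∈ Ω, φ z < 0)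
    {z : E n} (hz : z ∈ Ω) (v : E n) :
    lineDeriv ℝ (fun w => -Real.log (-(φ w))) z v = -(lineDeriv ℝ φ z v / φ z)
    ∧ lineD2 (fun w => -Real.log (-(φ w))) z v
        = -(lineD2 φ z v / φ z) + (lineDeriv ℝ φ z v)^2 / (φ z)^2 := by
  obtain ⟨hEv, hD, hfd⟩ := line_pack hΩ hφ hz v
  have hφz : φ z < 0 := hneg z hz
  have hEv2 : ∀ᶠ t in nhds (0:ℝ),
      HasDerivAt (fun r : ℝ => -Real.log (-(φ (z + r • v))))
        (-(fderiv ℝ φ (z + t • v) v / φ (z + t • v))) t := by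
    filter_upwards [hEv] with t ⟨ht, hd⟩
    have hne : φ (z + t • v) ≠ 0 := (hneg _ ht).ne
    have := (hd.neg.log (by simpa using hne)).neg
    simpa [neg_div_neg_eq, Pi.neg_def] using this
  have h00 : z + (0:ℝ) • v = z := by simp
  have hd0 : HasDerivAt (fun t : ℝ =>
      -(fderiv ℝ φ (z + t • v) v / φ (z + t • v)))
      (-((lineD2 φ z v * φ z - fderiv ℝ φ z v * fderiv ℝ φ z v) / φ z ^ 2)) 0 := by
    have hu : HasDerivAt (fun t : ℝ => φ (z + t • v)) (fderiv ℝ φ (z + (0:ℝ) • v) v) 0 :=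
      hEv.self_of_nhds.2
    have hD' : HasDerivAt (fun t : ℝ => fderiv ℝ φ (z + t • v) v) (lineD2 φ z v) 0 := hD
    have hne : φ (z + (0:ℝ) • v) ≠ 0 := by rw [h00]; exact hφz.ne
    have := (hD'.div hu hne).neg
    simpa [h00, Pi.neg_def, Pi.div_def] using this
  constructor
  · have := hEv2.self_of_nhds.deriv
    rw [lineDeriv, this, h00, hfd]
  · have hde : deriv (fun r : ℝ => -Real.log (-(φ (z + r • v)))) =ᶠ[nhds (0:ℝ)]
        fun t => -(fderiv ℝ φ (z + t • v) v / φ (z + t • v)) := by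
      filter_upwards [hEv2] with t ht using ht.deriv
    rw [lineD2, hde.deriv_eq, hd0.deriv, hfd]
    have : φ z ≠ 0 := hφz.ne
    field_simp
    ring

/-- Linearity of `lineD2` for the specific combination needed. -/
lemma comb_line {Ω U : Set (E n)} {φ ψ : E n → ℝ} (hΩ : IsOpen Ω)
    (hφ : ContDiffOn ℝ 2 φ Ω) (hneg : ∀ z ∈ Ω, φ z < 0)
    (hU : IsOpen U) (hΩU : Ω ⊆ U) (hψ : ContDiffOn ℝ 2 ψ U) (c : ℝ)
    {z : E n} (hz : z ∈ Ω) (v : E n) :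
    lineD2 (fun w => c * ψ w - Real.log (-(φ w))) z v
      = c * lineD2 ψ z v + lineD2 (fun w => -Real.log (-(φ w))) z v := by
  -- C² of the hat function on Ω
  have hhat : ContDiffOn ℝ 2 (fun w => -Real.log (-(φ w))) Ω := by
    intro w hw
    have h1 : ContDiffAt ℝ 2 φ w := hφ.contDiffAt (hΩ.mem_nhds hw)
    have h2 : ContDiffAt ℝ 2 Real.log (-(φ w)) :=
      Real.contDiffAt_log.2 (by simpa using (hneg w hw).ne)
    exact ((h2.comp w h1.neg).neg).contDiffWithinAt
  obtain ⟨hEψ, hDψ, _⟩ := line_pack hU (hψ) (hΩU hz) v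
  obtain ⟨hEh, hDh, _⟩ := line_pack hΩ hhat hz v
  have hEv : ∀ᶠ t in nhds (0:ℝ),
      HasDerivAt (fun r : ℝ => c * ψ (z + r • v) - Real.log (-(φ (z + r • v))))
        (c * fderiv ℝ ψ (z + t • v) v
          + fderiv ℝ (fun w => -Real.log (-(φ w))) (z + t • v) v) t := by
    filter_upwards [hEψ, hEh] with t ⟨htψ, hdψ⟩ ⟨hth, hdh⟩
    have := (hdψ.const_mul c).add hdh
    simpa [sub_eq_add_neg, Pi.add_def] using this
  have hde : deriv (fun r : ℝ => c * ψ (z + r • v) - Real.log (-(φ (z + r • v))))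
      =ᶠ[nhds (0:ℝ)] fun t => c * fderiv ℝ ψ (z + t • v) v
          + fderiv ℝ (fun w => -Real.log (-(φ w))) (z + t • v) v := by
    filter_upwards [hEv] with t ht using ht.deriv
  rw [lineD2, hde.deriv_eq]
  exact ((hDψ.const_mul c).add hDh).deriv


noncomputable def hatF (φ : E n → ℝ) : E n → ℝ := fun w => -Real.log (-(φ w))
noncomputable def GF (n : ℕ) (φ ψ : E n → ℝ) : E n → ℝ :=
  fun w => (1 / (2 * (n:ℝ))) * ψ w - Real.log (-(φ w))

section ctx
variable {Ω U : Set (E n)} {φ ψ : E n → ℝ}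
variable (hΩ : IsOpen Ω) (hφ : ContDiffOn ℝ 2 φ Ω) (hneg : ∀ z ∈ Ω, φ z < 0)
variable (hU : IsOpen U) (hΩU : Ω ⊆ U) (hψ : ContDiffOn ℝ 2 ψ U)

include hΩ hφ hneg in
lemma hatF_C2 : ContDiffOn ℝ 2 (hatF φ) Ω := by
  intro w hw
  have h1 : ContDiffAt ℝ 2 φ w := hφ.contDiffAt (hΩ.mem_nhds hw)
  have h2 : ContDiffAt ℝ 2 Real.log (-(φ w)) :=
    Real.contDiffAt_log.2 (by simpa using (hneg w hw).ne)
  exact ((h2.comp w h1.neg).neg).contDiffWithinAt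

include hΩ hφ hneg hΩU hψ in
lemma GF_C2 : ContDiffOn ℝ 2 (GF n φ ψ) Ω := by
  have hlog : ContDiffOn ℝ 2 (fun w => Real.log (-(φ w))) Ω := by
    intro w hw
    have h1 : ContDiffAt ℝ 2 φ w := hφ.contDiffAt (hΩ.mem_nhds hw)
    have h2 : ContDiffAt ℝ 2 Real.log (-(φ w)) :=
      Real.contDiffAt_log.2 (by simpa using (hneg w hw).ne)
    exact (h2.comp w h1.neg).contDiffWithinAt
  exact (contDiffOn_const.mul (hψ.mono hΩU)).sub hlog

include hΩ hφ hneg hU hΩU hψ in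
lemma leviQ_GF {z : E n} (hz : z ∈ Ω) (v : E n) :
    leviQ (GF n φ ψ) z v = (1 / (2 * (n:ℝ))) * leviQ ψ z v
      + (-(leviQ φ z v / φ z))
      + ((lineDeriv ℝ φ z v)^2 + (lineDeriv ℝ φ z (Complex.I • v))^2) / (φ z)^2 := by
  have h1 := comb_line hΩ hφ hneg hU hΩU hψ (1 / (2 * (n:ℝ))) hz v
  have h2 := comb_line hΩ hφ hneg hU hΩU hψ (1 / (2 * (n:ℝ))) hz (Complex.I • v)
  have h3 := (hat_line hΩ hφ hneg hz v).2
  have h4 := (hat_line hΩ hφ hneg hz (Complex.I • v)).2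
  show lineD2 (GF n φ ψ) z v + lineD2 (GF n φ ψ) z (Complex.I • v) = _
  rw [show (GF n φ ψ) = fun w => (1 / (2 * (n:ℝ))) * ψ w - Real.log (-(φ w)) from rfl,
    h1, h2, h3, h4]
  rw [leviQ, leviQ]
  have : φ z ≠ 0 := (hneg z hz).ne
  field_simp
  ring

include hΩ hφ hneg hU hΩU hψ in
lemma leviQ_GF_ge_psi {z : E n} (hz : z ∈ Ω) (v : E n) (hpsh : 0 ≤ leviQ φ z v) :
    (1 / (2 * (n:ℝ))) * leviQ ψ z v ≤ leviQ (GF n φ ψ) z v := by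
  rw [leviQ_GF hΩ hφ hneg hU hΩU hψ hz v]
  have h1 : 0 ≤ -(leviQ φ z v / φ z) := by
    have := hneg z hz
    have : leviQ φ z v / φ z ≤ 0 := div_nonpos_iff.2 (Or.inl ⟨hpsh, this.le⟩)
    linarith
  have h2 : 0 ≤ ((lineDeriv ℝ φ z v)^2 + (lineDeriv ℝ φ z (Complex.I • v))^2) / (φ z)^2 :=
    div_nonneg (by positivity) (by positivity)
  linarith

include hΩ hφ hneg hU hΩU hψ in
lemma grad_bound {z : E n} (hz : z ∈ Ω) (v : E n) (hpsh : 0 ≤ leviQ φ z v)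
    (hψnn : 0 ≤ leviQ ψ z v) :
    (fderiv ℝ (hatF φ) z v)^2 ≤ leviQ (GF n φ ψ) z v := by
  have hfd : fderiv ℝ (hatF φ) z v = lineDeriv ℝ (hatF φ) z v :=
    (line_pack hΩ (hatF_C2 hΩ hφ hneg) hz v).2.2
  have hld : lineDeriv ℝ (hatF φ) z v = -(lineDeriv ℝ φ z v / φ z) :=
    (hat_line hΩ hφ hneg hz v).1
  rw [hfd, hld, leviQ_GF hΩ hφ hneg hU hΩU hψ hz v]
  have hφz : φ z < 0 := hneg z hz
  have h1 : 0 ≤ -(leviQ φ z v / φ z) := by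
    have : leviQ φ z v / φ z ≤ 0 := div_nonpos_iff.2 (Or.inl ⟨hpsh, hφz.le⟩)
    linarith
  have h2 : 0 ≤ (1 / (2 * (n:ℝ))) * leviQ ψ z v := by positivity
  have h3 : (-(lineDeriv ℝ φ z v / φ z))^2
      ≤ ((lineDeriv ℝ φ z v)^2 + (lineDeriv ℝ φ z (Complex.I • v))^2) / (φ z)^2 := by
    rw [neg_pow, div_pow]
    have : (lineDeriv ℝ φ z v)^2 / (φ z)^2
        ≤ ((lineDeriv ℝ φ z v)^2 + (lineDeriv ℝ φ z (Complex.I • v))^2) / (φ z)^2 := by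
      apply div_le_div_of_nonneg_right ?_ (by positivity)
      · linarith [sq_nonneg (lineDeriv ℝ φ z (Complex.I • v))]
    simpa using this
  linarith

include hΩ hφ hneg hU hΩU hψ in
lemma pos_GF (hn : 1 ≤ n) (hψstrict : ∀ z ∈ U, ∀ v : E n, v ≠ 0 → 0 < leviQ ψ z v)
    (hpsh : ∀ z ∈ Ω, ∀ v, 0 ≤ leviQ φ z v)
    {z : E n} (hz : z ∈ Ω) {v : E n} (hv : v ≠ 0) :
    0 < leviQ (GF n φ ψ) z v := by
  have hc : 0 < 1 / (2 * (n:ℝ)) := by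
    have : (0:ℝ) < n := by exact_mod_cast hn
    positivity
  have := leviQ_GF_ge_psi hΩ hφ hneg hU hΩU hψ hz v (hpsh z hz v)
  have h2 : 0 < (1 / (2 * (n:ℝ))) * leviQ ψ z v :=
    mul_pos hc (hψstrict z (hΩU hz) v hv)
  linarith


include hΩ hφ hneg hU hΩU hψ in
lemma path_lb (hpsh : ∀ z ∈ Ω, ∀ v, 0 ≤ leviQ φ z v)
    (hψnn : ∀ z ∈ Ω, ∀ v, 0 ≤ leviQ ψ z v)
    {c₀ : ℝ} (hc₀0 : 0 ≤ c₀)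
    (hc₀ : ∀ z ∈ Ω, ∀ v, c₀ * ‖v‖^2 ≤ leviQ (GF n φ ψ) z v)
    {γ : ℝ → E n} (hγ : ContDiff ℝ 1 γ) (hmem : ∀ t ∈ Set.Icc (0:ℝ) 1, γ t ∈ Ω) :
    |hatF φ (γ 1) - hatF φ (γ 0)| ≤ pathLen (leviQ (GF n φ ψ)) γ
    ∧ Real.sqrt c₀ * ‖γ 1 - γ 0‖ ≤ pathLen (leviQ (GF n φ ψ)) γ := by
  have hγd : ∀ t : ℝ, HasDerivAt γ (deriv γ t) t :=
    fun t => (hγ.differentiable one_ne_zero t).hasDerivAt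
  have hγdc : Continuous (deriv γ) := hγ.continuous_deriv le_rfl
  have hGC2 := GF_C2 hΩ hφ hneg hΩU hψ
  have hIcc : Set.uIcc (0:ℝ) 1 = Set.Icc 0 1 := uIcc_of_le zero_le_one
  -- continuity of the metric integrand
  have hHc : ContinuousOn (fun t => leviQ (GF n φ ψ) (γ t) (deriv γ t)) (Set.Icc (0:ℝ) 1) := by
    have hpair : Continuous (fun t : ℝ => (γ t, deriv γ t)) :=
      hγ.continuous.prodMk hγdc
    show ContinuousOn ((fun p : (E n) × (E n) => leviQ (GF n φ ψ) p.1 p.2)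
      ∘ (fun t => (γ t, deriv γ t))) (Set.Icc (0:ℝ) 1)
    exact (leviQ_contOn hΩ hGC2).comp hpair.continuousOn
      (fun t ht => (⟨hmem t ht, mem_univ _⟩ :
        (γ t, deriv γ t) ∈ Ω ×ˢ (univ : Set (E n))))
  have hsq : ContinuousOn (fun t => Real.sqrt (leviQ (GF n φ ψ) (γ t) (deriv γ t)))
      (Set.Icc (0:ℝ) 1) := Real.continuous_sqrt.comp_continuousOn hHc
  have hsqI : IntervalIntegrable
      (fun t => Real.sqrt (leviQ (GF n φ ψ) (γ t) (deriv γ t))) volume 0 1 :=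
    (hsq.mono (by rw [hIcc])).intervalIntegrable
  constructor
  · -- |φ̂(γ1)-φ̂(γ0)| ≤ length
    have hhatC2 := hatF_C2 hΩ hφ hneg
    have hkey : ∀ t ∈ Set.uIcc (0:ℝ) 1, HasDerivAt (fun t => hatF φ (γ t))
        (fderiv ℝ (hatF φ) (γ t) (deriv γ t)) t := by
      intro t ht
      rw [hIcc] at ht
      have hdiff : DifferentiableAt ℝ (hatF φ) (γ t) :=
        (hhatC2.differentiableOn (by norm_num)).differentiableAt
          (hΩ.mem_nhds (hmem t ht))
      simpa [Function.comp_def] using hdiff.hasFDerivAt.comp_hasDerivAt t (hγd t)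
    have hfc : ContinuousOn (fun t => fderiv ℝ (hatF φ) (γ t) (deriv γ t))
        (Set.Icc (0:ℝ) 1) := by
      have h1 : ContinuousOn (fderiv ℝ (hatF φ)) Ω :=
        hhatC2.continuousOn_fderiv_of_isOpen hΩ (by norm_num)
      exact (h1.comp hγ.continuous.continuousOn (fun t ht => hmem t ht)).clm_apply
        hγdc.continuousOn
    have hint : IntervalIntegrable (fun t => fderiv ℝ (hatF φ) (γ t) (deriv γ t))
        volume 0 1 := (hfc.mono (by rw [hIcc])).intervalIntegrable
    have hftc : hatF φ (γ 1) - hatF φ (γ 0)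
        = ∫ t in (0:ℝ)..1, fderiv ℝ (hatF φ) (γ t) (deriv γ t) :=
      (intervalIntegral.integral_eq_sub_of_hasDerivAt hkey hint).symm
    rw [hftc, pathLen]
    calc |∫ t in (0:ℝ)..1, fderiv ℝ (hatF φ) (γ t) (deriv γ t)|
        ≤ ∫ t in (0:ℝ)..1, |fderiv ℝ (hatF φ) (γ t) (deriv γ t)| :=
          intervalIntegral.abs_integral_le_integral_abs zero_le_one
      _ ≤ ∫ t in (0:ℝ)..1, Real.sqrt (leviQ (GF n φ ψ) (γ t) (deriv γ t)) := by
          apply intervalIntegral.integral_mono_on zero_le_one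
            ((hfc.abs.mono (by rw [hIcc])).intervalIntegrable) hsqI
          intro t ht
          have hb := grad_bound hΩ hφ hneg hU hΩU hψ (hmem t ht) (deriv γ t)
            (hpsh _ (hmem t ht) _) (hψnn _ (hmem t ht) _)
          calc |fderiv ℝ (hatF φ) (γ t) (deriv γ t)|
              = Real.sqrt ((fderiv ℝ (hatF φ) (γ t) (deriv γ t))^2) :=
                (Real.sqrt_sq_eq_abs _).symm
            _ ≤ _ := Real.sqrt_le_sqrt hb
  · -- Euclidean lower bound
    have hftc : γ 1 - γ 0 = ∫ t in (0:ℝ)..1, deriv γ t :=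
      (intervalIntegral.integral_eq_sub_of_hasDerivAt (fun t _ => hγd t)
        (hγdc.intervalIntegrable 0 1)).symm
    have h1 : ‖γ 1 - γ 0‖ ≤ ∫ t in (0:ℝ)..1, ‖deriv γ t‖ := by
      rw [hftc]
      exact intervalIntegral.norm_integral_le_integral_norm zero_le_one
    have h2 : Real.sqrt c₀ * ‖γ 1 - γ 0‖
        ≤ ∫ t in (0:ℝ)..1, Real.sqrt c₀ * ‖deriv γ t‖ := by
      rw [intervalIntegral.integral_const_mul]
      exact mul_le_mul_of_nonneg_left h1 (Real.sqrt_nonneg _)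
    refine h2.trans ?_
    apply intervalIntegral.integral_mono_on zero_le_one
      (((continuous_const.mul hγdc.norm).continuousOn).intervalIntegrable) hsqI
    intro t ht
    have := hc₀ _ (hmem t ht) (deriv γ t)
    calc Real.sqrt c₀ * ‖deriv γ t‖
        = Real.sqrt (c₀ * ‖deriv γ t‖^2) := by
          rw [Real.sqrt_mul hc₀0, Real.sqrt_sq (norm_nonneg _)]
      _ ≤ _ := Real.sqrt_le_sqrt this

lemma pathLen_nonneg (H : (E n) → (E n) → ℝ) (γ : ℝ → E n) : 0 ≤ pathLen H γ :=
  intervalIntegral.integral_nonneg zero_le_one (fun t _ => Real.sqrt_nonneg _)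

lemma wDist_nonneg (Ω : Set (E n)) (H : (E n) → (E n) → ℝ) (x y : E n) :
    0 ≤ wDist Ω H x y := by
  apply Real.sInf_nonneg
  rintro L ⟨γ, _, _, _, _, rfl⟩
  exact pathLen_nonneg H γ


include hΩ hφ hneg hU hΩU hψ in
lemma unif_const (hn : 1 ≤ n) (hbd : Bornology.IsBounded Ω) (hclU : closure Ω ⊆ U)
    (hψstrict : ∀ z ∈ U, ∀ v : E n, v ≠ 0 → 0 < leviQ ψ z v)
    (hpsh : ∀ z ∈ Ω, ∀ v, 0 ≤ leviQ φ z v) (hne : Ω.Nonempty) :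
    ∃ c₀ > 0, ∀ z ∈ Ω, ∀ v, c₀ * ‖v‖^2 ≤ leviQ (GF n φ ψ) z v := by
  haveI : Nonempty (Fin n) := ⟨⟨0, hn⟩⟩
  have hnpos : (0:ℝ) < n := by exact_mod_cast hn
  have hsph : (sphere (0 : E n) 1).Nonempty := NormedSpace.sphere_nonempty.2 zero_le_one
  have hKc : IsCompact (closure Ω ×ˢ sphere (0:E n) 1) :=
    hbd.isCompact_closure.prod (isCompact_sphere _ _)
  have hKne : (closure Ω ×ˢ sphere (0:E n) 1).Nonempty := hne.closure.prod hsph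
  have hcont : ContinuousOn (fun p : E n × E n => leviQ ψ p.1 p.2)
      (closure Ω ×ˢ sphere (0:E n) 1) :=
    (leviQ_contOn hU hψ).mono (prod_mono hclU (subset_univ _))
  obtain ⟨p, hp, hmin⟩ := hKc.exists_isMinOn hKne hcont
  have hp2 : p.2 ≠ 0 := by
    have : ‖p.2‖ = 1 := by simpa using hp.2
    intro h0; rw [h0] at this; simp at this
  have hm : 0 < leviQ ψ p.1 p.2 := hψstrict p.1 (hclU hp.1) p.2 hp2
  refine ⟨(1 / (2 * (n:ℝ))) * leviQ ψ p.1 p.2, by positivity, ?_⟩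
  intro z hz v
  by_cases hv : v = 0
  · simp [hv, leviQ_zero]
  · have hnv : ‖v‖ ≠ 0 := norm_ne_zero_iff.2 hv
    have hunit : (‖v‖⁻¹ • v) ∈ sphere (0:E n) 1 := by
      simp [norm_smul, inv_mul_cancel₀ hnv]
    have h1 : leviQ ψ p.1 p.2 ≤ leviQ ψ z (‖v‖⁻¹ • v) :=
      isMinOn_iff.1 hmin (z, ‖v‖⁻¹ • v) ⟨subset_closure hz, hunit⟩
    have h2 := leviQ_smul hU hψ (hΩU hz) (‖v‖⁻¹ • v) ‖v‖
    rw [smul_smul, mul_inv_cancel₀ hnv, one_smul] at h2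
    have h3 := leviQ_GF_ge_psi hΩ hφ hneg hU hΩU hψ hz v (hpsh z hz v)
    have h4 : (1 / (2 * (n:ℝ))) * leviQ ψ p.1 p.2 * ‖v‖^2
        ≤ (1 / (2 * (n:ℝ))) * leviQ ψ z v := by
      rw [h2]
      have := mul_le_mul_of_nonneg_left h1 (le_of_lt (show (0:ℝ) < 1/(2*(n:ℝ)) by positivity))
      nlinarith [sq_nonneg ‖v‖]
    linarith

include hΩ hφ hneg hU hΩU hψ in
lemma seg_ub (hn : 1 ≤ n) {l : E n} (hl : l ∈ Ω) :
    ∃ r > 0, ∃ M : ℝ, ∀ z ∈ closedBall l r,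
      wDist Ω (leviQ (GF n φ ψ)) z l ≤ M * ‖z - l‖ := by
  haveI : Nonempty (Fin n) := ⟨⟨0, hn⟩⟩
  obtain ⟨ε, hε, hball⟩ := Metric.isOpen_iff.1 hΩ l hl
  refine ⟨ε/2, by positivity, ?_⟩
  have hsub : closedBall l (ε/2) ⊆ Ω :=
    (closedBall_subset_ball (by linarith)).trans hball
  have hGC2 := GF_C2 hΩ hφ hneg hΩU hψ
  have hsph : (sphere (0 : E n) 1).Nonempty := NormedSpace.sphere_nonempty.2 zero_le_one
  have hKc : IsCompact (closedBall l (ε/2) ×ˢ sphere (0:E n) 1) :=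
    (isCompact_closedBall _ _).prod (isCompact_sphere _ _)
  have hcne : (closedBall l (ε/2)).Nonempty := ⟨l, mem_closedBall_self (by positivity)⟩
  have hKne : (closedBall l (ε/2) ×ˢ sphere (0:E n) 1).Nonempty := hcne.prod hsph
  have hcont : ContinuousOn (fun p : E n × E n => leviQ (GF n φ ψ) p.1 p.2)
      (closedBall l (ε/2) ×ˢ sphere (0:E n) 1) :=
    (leviQ_contOn hΩ hGC2).mono (prod_mono hsub (subset_univ _))
  obtain ⟨p, hp, hmax⟩ := hKc.exists_isMaxOn hKne hcont
  refine ⟨Real.sqrt (leviQ (GF n φ ψ) p.1 p.2), ?_⟩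
  intro z hz
  set γ : ℝ → E n := fun t => z + t • (l - z) with hγdef
  have hγCD : ContDiff ℝ 1 γ := contDiff_const.add (contDiff_id.smul contDiff_const)
  have hγ0 : γ 0 = z := by simp [hγdef]
  have hγ1 : γ 1 = l := by simp [hγdef]
  have hγball : ∀ t ∈ Set.Icc (0:ℝ) 1, γ t ∈ closedBall l (ε/2) := fun t ht =>
    (convex_closedBall l (ε/2)).add_smul_sub_mem hz (mem_closedBall_self (by positivity)) ht
  have hγΩ : ∀ t ∈ Set.Icc (0:ℝ) 1, γ t ∈ Ω := fun t ht => hsub (hγball t ht)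
  have hd : ∀ t : ℝ, deriv γ t = l - z := fun t => (hasDerivAt_line z (l - z) t).deriv
  have hmem : pathLen (leviQ (GF n φ ψ)) γ ∈
      {L : ℝ | ∃ γ : ℝ → (E n), ContDiff ℝ 1 γ ∧ γ 0 = z ∧ γ 1 = l ∧
        (∀ t ∈ Set.Icc (0:ℝ) 1, γ t ∈ Ω) ∧ L = pathLen (leviQ (GF n φ ψ)) γ} :=
    ⟨γ, hγCD, hγ0, hγ1, hγΩ, rfl⟩
  have hbdd : BddBelow {L : ℝ | ∃ γ : ℝ → (E n), ContDiff ℝ 1 γ ∧ γ 0 = z ∧ γ 1 = l ∧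
      (∀ t ∈ Set.Icc (0:ℝ) 1, γ t ∈ Ω) ∧ L = pathLen (leviQ (GF n φ ψ)) γ} := by
    refine ⟨0, ?_⟩
    rintro L ⟨γ', _, _, _, _, rfl⟩
    exact pathLen_nonneg _ _
  have hwd : wDist Ω (leviQ (GF n φ ψ)) z l ≤ pathLen (leviQ (GF n φ ψ)) γ :=
    csInf_le hbdd hmem
  refine hwd.trans ?_
  -- bound the path length
  have hcongr : pathLen (leviQ (GF n φ ψ)) γ
      = ∫ t in (0:ℝ)..1, Real.sqrt (leviQ (GF n φ ψ) (γ t) (l - z)) := by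
    apply intervalIntegral.integral_congr
    intro t _
    simp only [hd]
  rw [hcongr]
  by_cases hzl : z = l
  · subst hzl
    simp [leviQ_zero]
  · have hlz : l - z ≠ 0 := sub_ne_zero.2 (Ne.symm hzl)
    have hnlz : ‖l - z‖ ≠ 0 := norm_ne_zero_iff.2 hlz
    have hptwise : ∀ t ∈ Set.Icc (0:ℝ) 1,
        Real.sqrt (leviQ (GF n φ ψ) (γ t) (l - z))
          ≤ ‖l - z‖ * Real.sqrt (leviQ (GF n φ ψ) p.1 p.2) := by
      intro t ht
      have hunit : (‖l - z‖⁻¹ • (l - z)) ∈ sphere (0:E n) 1 := by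
        simp [norm_smul, inv_mul_cancel₀ hnlz]
      have h2 := leviQ_smul hΩ hGC2 (hγΩ t ht) (‖l - z‖⁻¹ • (l - z)) ‖l - z‖
      rw [smul_smul, mul_inv_cancel₀ hnlz, one_smul] at h2
      have h1 : leviQ (GF n φ ψ) (γ t) (‖l - z‖⁻¹ • (l - z)) ≤ leviQ (GF n φ ψ) p.1 p.2 :=
        isMaxOn_iff.1 hmax (γ t, ‖l - z‖⁻¹ • (l - z)) ⟨hγball t ht, hunit⟩
      calc Real.sqrt (leviQ (GF n φ ψ) (γ t) (l - z))
          ≤ Real.sqrt (‖l - z‖^2 * leviQ (GF n φ ψ) p.1 p.2) := by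
            apply Real.sqrt_le_sqrt
            rw [h2]
            nlinarith [sq_nonneg ‖l - z‖]
        _ = ‖l - z‖ * Real.sqrt (leviQ (GF n φ ψ) p.1 p.2) := by
            rw [Real.sqrt_mul (by positivity), Real.sqrt_sq (norm_nonneg _)]
    have hHc : ContinuousOn (fun t => Real.sqrt (leviQ (GF n φ ψ) (γ t) (l - z)))
        (Set.Icc (0:ℝ) 1) := by
      apply Real.continuous_sqrt.comp_continuousOn
      show ContinuousOn ((fun p : (E n) × (E n) => leviQ (GF n φ ψ) p.1 p.2)
        ∘ (fun t => (γ t, l - z))) (Set.Icc (0:ℝ) 1)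
      exact (leviQ_contOn hΩ hGC2).comp
        (hγCD.continuous.prodMk continuous_const).continuousOn
        (fun t ht => (⟨hγΩ t ht, mem_univ _⟩ :
          (γ t, l - z) ∈ Ω ×ˢ (univ : Set (E n))))
    calc (∫ t in (0:ℝ)..1, Real.sqrt (leviQ (GF n φ ψ) (γ t) (l - z)))
        ≤ ∫ _t in (0:ℝ)..1, ‖l - z‖ * Real.sqrt (leviQ (GF n φ ψ) p.1 p.2) := by
          apply intervalIntegral.integral_mono_on zero_le_one
            ((hHc.mono (by rw [uIcc_of_le (zero_le_one' ℝ)])).intervalIntegrable)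
            intervalIntegrable_const hptwise
      _ = Real.sqrt (leviQ (GF n φ ψ) p.1 p.2) * ‖z - l‖ := by
          rw [intervalIntegral.integral_const]
          rw [norm_sub_rev]
          simp [mul_comm]

end ctx

section conn
variable {Ω : Set (E n)}

/-- `C¹`-joinedness inside `Ω`. -/
def R (Ω : Set (E n)) (x y : E n) : Prop :=
  ∃ γ : ℝ → E n, ContDiff ℝ 1 γ ∧ γ 0 = x ∧ γ 1 = y ∧ ∀ t : ℝ, γ t ∈ Ω

lemma R_refl {x : E n} (hx : x ∈ Ω) : R Ω x x :=
  ⟨fun _ => x, contDiff_const, rfl, rfl, fun _ => hx⟩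

lemma R_symm {x y : E n} (h : R Ω x y) : R Ω y x := by
  obtain ⟨γ, hCD, h0, h1, hmem⟩ := h
  exact ⟨fun t => γ (1 - t), hCD.comp (contDiff_const.sub contDiff_id),
    by simpa using h1, by simpa using h0, fun t => hmem _⟩

lemma R_seg {B : Set (E n)} (hB : Convex ℝ B) (hBΩ : B ⊆ Ω) {x y : E n}
    (hx : x ∈ B) (hy : y ∈ B) : R Ω x y := by
  refine ⟨fun t => x + Real.smoothTransition t • (y - x),
    contDiff_const.add ((Real.smoothTransition.contDiff).smul contDiff_const), ?_, ?_, ?_⟩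
  · simp [Real.smoothTransition.zero]
  · simp [Real.smoothTransition.one]
  · intro t
    exact hBΩ (hB.add_smul_sub_mem hx hy
      ⟨Real.smoothTransition.nonneg t, Real.smoothTransition.le_one t⟩)

lemma R_trans {x y z : E n} (h1 : R Ω x y) (h2 : R Ω y z) : R Ω x z := by
  obtain ⟨γ₁, hCD1, h10, h11, hm1⟩ := h1
  obtain ⟨γ₂, hCD2, h20, h21, hm2⟩ := h2
  have hσCD : ContDiff ℝ 1 Real.smoothTransition := Real.smoothTransition.contDiff
  set γ : ℝ → E n := fun t => if t < 1/2 then γ₁ (Real.smoothTransition (3 * t))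
    else γ₂ (Real.smoothTransition (3 * t - 2)) with hγ
  have hf₁CD : ContDiff ℝ 1 (fun t : ℝ => γ₁ (Real.smoothTransition (3 * t))) :=
    hCD1.comp (hσCD.comp (contDiff_const.mul contDiff_id))
  have hf₂CD : ContDiff ℝ 1 (fun t : ℝ => γ₂ (Real.smoothTransition (3 * t - 2))) :=
    hCD2.comp (hσCD.comp ((contDiff_const.mul contDiff_id).sub contDiff_const))
  have e0 : ∀ t : ℝ, γ t = if t < 1/2 then γ₁ (Real.smoothTransition (3 * t))
      else γ₂ (Real.smoothTransition (3 * t - 2)) := fun t => rfl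
  have hA : ∀ t ∈ Set.Iio (2/3 : ℝ), γ t = γ₁ (Real.smoothTransition (3 * t)) := by
    intro t ht
    simp only [Set.mem_Iio] at ht
    rw [e0]
    by_cases h : t < 1/2
    · rw [if_pos h]
    · rw [if_neg h]
      push_neg at h
      rw [Real.smoothTransition.zero_of_nonpos (by linarith),
        Real.smoothTransition.one_of_one_le (by linarith), h20, h11]
  have hB : ∀ t ∈ Set.Ioi (1/3 : ℝ), γ t = γ₂ (Real.smoothTransition (3 * t - 2)) := by
    intro t ht
    simp only [Set.mem_Ioi] at ht
    rw [e0]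
    by_cases h : t < 1/2
    · rw [if_pos h]
      rw [Real.smoothTransition.one_of_one_le (by linarith),
        Real.smoothTransition.zero_of_nonpos (by linarith), h11, h20]
    · rw [if_neg h]
  have hCD : ContDiff ℝ 1 γ := by
    rw [contDiff_iff_contDiffAt]
    intro t
    rcases lt_or_ge t (2/3 : ℝ) with h | h
    · exact hf₁CD.contDiffAt.congr_of_eventuallyEq
        (Filter.eventuallyEq_of_mem (Iio_mem_nhds h) (fun s hs => hA s hs))
    · exact hf₂CD.contDiffAt.congr_of_eventuallyEq
        (Filter.eventuallyEq_of_mem (Ioi_mem_nhds (by linarith : (1/3:ℝ) < t))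
          (fun s hs => hB s hs))
  refine ⟨γ, hCD, ?_, ?_, ?_⟩
  · rw [e0, if_pos (by norm_num : (0:ℝ) < 1/2)]
    rw [show (3 * (0:ℝ)) = 0 by norm_num, Real.smoothTransition.zero, h10]
  · rw [e0, if_neg (by norm_num : ¬ ((1:ℝ) < 1/2))]
    rw [show (3 * (1:ℝ) - 2) = 1 by norm_num, Real.smoothTransition.one, h21]
  · intro t
    rw [e0]
    by_cases h : t < 1/2
    · rw [if_pos h]; exact hm1 _
    · rw [if_neg h]; exact hm2 _

lemma joinedR (hΩ : IsOpen Ω) (hconn : IsPreconnected Ω) {x y : E n}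
    (hx : x ∈ Ω) (hy : y ∈ Ω) : R Ω x y := by
  by_contra hR
  set W : Set (E n) := {w | w ∈ Ω ∧ R Ω x w} with hW
  set V : Set (E n) := {w | w ∈ Ω ∧ ¬ R Ω x w} with hV
  have hWo : IsOpen W := by
    rw [Metric.isOpen_iff]
    intro w hw
    obtain ⟨ε, hε, hball⟩ := Metric.isOpen_iff.1 hΩ w hw.1
    refine ⟨ε, hε, fun z' hz' => ⟨hball hz', R_trans hw.2
      (R_seg (convex_ball w ε) hball (mem_ball_self hε) hz')⟩⟩
  have hVo : IsOpen V := by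
    rw [Metric.isOpen_iff]
    intro w hw
    obtain ⟨ε, hε, hball⟩ := Metric.isOpen_iff.1 hΩ w hw.1
    refine ⟨ε, hε, fun z' hz' => ⟨hball hz', fun hRz' => hw.2 (R_trans hRz'
      (R_symm (R_seg (convex_ball w ε) hball (mem_ball_self hε) hz')))⟩⟩
  have hsub : Ω ⊆ W ∪ V := fun w hw => by
    by_cases h : R Ω x w
    · exact Or.inl ⟨hw, h⟩
    · exact Or.inr ⟨hw, h⟩
  obtain ⟨p, _, hpW, hpV⟩ := hconn W V hWo hVo hsub
    ⟨x, hx, hx, R_refl hx⟩ ⟨y, hy, hy, hR⟩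
  exact hpV.2 hpW.2

end conn

end S4

/-- on a bounded domain `Ω` with smooth negative plurisubharmonic `φ`
tending to `0` at `∂Ω`, and `ψ` smooth strictly plurisubharmonic on a neighborhood of
`closure Ω`, the form `ω = i∂∂̄((1/(2n))ψ + φ̂)` (with `φ̂ = -log(-φ)`) is a complete
Kähler metric on `Ω`: it is positive definite at every point of `Ω`, and `Ω` is complete
for the induced geodesic distance. -/
theorem statement4 {n : ℕ} (hn : 1 ≤ n) {Ω U : Set (Fin n → ℂ)} (hΩ : IsOpen Ω)
    (hconn : IsPreconnected Ω) (hbd : Bornology.IsBounded Ω)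
    {φ ψ : (Fin n → ℂ) → ℝ} (hφ : ContDiffOn ℝ (⊤ : ℕ∞) φ Ω)
    (hneg : ∀ z ∈ Ω, φ z < 0) (hpsh : ∀ z ∈ Ω, ∀ v, 0 ≤ leviQ φ z v)
    (hlim : ∀ ε : ℝ, 0 < ε → IsClosed {z | z ∈ Ω ∧ φ z ≤ -ε})
    (hU : IsOpen U) (hclU : closure Ω ⊆ U) (hψ : ContDiffOn ℝ (⊤ : ℕ∞) ψ U)
    (hψstrict : ∀ z ∈ U, ∀ v : Fin n → ℂ, v ≠ 0 → 0 < leviQ ψ z v) :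
    (∀ z ∈ Ω, ∀ v : Fin n → ℂ, v ≠ 0 →
        0 < leviQ (fun w => (1 / (2 * (n:ℝ))) * ψ w - Real.log (-(φ w))) z v) ∧
      (∀ x : ℕ → Fin n → ℂ, (∀ k, x k ∈ Ω) →
        (∀ ε : ℝ, 0 < ε → ∃ N : ℕ, ∀ j ≥ N, ∀ k ≥ N,
          wDist Ω (leviQ (fun w => (1 / (2 * (n:ℝ))) * ψ w - Real.log (-(φ w)))) (x j) (x k) < ε) →
        ∃ l ∈ Ω, Filter.Tendsto
          (fun k => wDist Ω (leviQ (fun w => (1 / (2 * (n:ℝ))) * ψ w - Real.log (-(φ w)))) (x k) l)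
          Filter.atTop (nhds 0)) := by
  classical
  have hφ2 : ContDiffOn ℝ 2 φ Ω := hφ.of_le (WithTop.coe_le_coe.2 le_top)
  have hψ2 : ContDiffOn ℝ 2 ψ U := hψ.of_le (WithTop.coe_le_coe.2 le_top)
  have hΩU : Ω ⊆ U := subset_closure.trans hclU
  have hrw : (fun w => (1 / (2 * (n:ℝ))) * ψ w - Real.log (-(φ w))) = S4.GF n φ ψ := rfl
  rw [hrw]
  constructor
  · intro z hz v hv
    exact S4.pos_GF hΩ hφ2 hneg hU hΩU hψ2 hn hψstrict hpsh hz hv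
  · intro x hx hcauchy
    have hne : Ω.Nonempty := ⟨x 0, hx 0⟩
    obtain ⟨c₀, hc₀pos, hc₀⟩ :=
      S4.unif_const hΩ hφ2 hneg hU hΩU hψ2 hn hbd hclU hψstrict hpsh hne
    have hψnn : ∀ z ∈ Ω, ∀ v, 0 ≤ leviQ ψ z v := by
      intro z hz v
      by_cases hv : v = 0
      · simp [hv, S4.leviQ_zero]
      · exact (hψstrict z (hΩU hz) v hv).le
    set H := leviQ (S4.GF n φ ψ) with hHdef
    -- extraction of short paths
    have hpath : ∀ j k : ℕ, ∀ ε : ℝ, 0 < ε → wDist Ω H (x j) (x k) < ε →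
        ∃ γ : ℝ → (Fin n → ℂ), ContDiff ℝ 1 γ ∧ γ 0 = x j ∧ γ 1 = x k ∧
          (∀ t ∈ Set.Icc (0:ℝ) 1, γ t ∈ Ω) ∧ pathLen H γ < ε := by
      intro j k ε hε hw
      obtain ⟨γ, hCD, h0, h1, hm⟩ := S4.joinedR hΩ hconn (hx j) (hx k)
      have hneS : Set.Nonempty {L : ℝ | ∃ γ : ℝ → (Fin n → ℂ), ContDiff ℝ 1 γ ∧
          γ 0 = x j ∧ γ 1 = x k ∧ (∀ t ∈ Set.Icc (0:ℝ) 1, γ t ∈ Ω) ∧ L = pathLen H γ} :=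
        ⟨pathLen H γ, γ, hCD, h0, h1, fun t _ => hm t, rfl⟩
      obtain ⟨L, hL, hLε⟩ := exists_lt_of_csInf_lt hneS hw
      obtain ⟨γ', hCD', h0', h1', hm', hLdef⟩ := hL
      exact ⟨γ', hCD', h0', h1', hm', by rw [← hLdef]; exact hLε⟩
    -- uniform bound on φ̂ along the sequence
    obtain ⟨N₀, hN₀⟩ := hcauchy 1 one_pos
    have hhatb : ∀ k, k ≥ N₀ → S4.hatF φ (x k) ≤ S4.hatF φ (x N₀) + 1 := by
      intro k hk
      obtain ⟨γ, hCD, h0, h1, hm, hlen⟩ := hpath N₀ k 1 one_pos (hN₀ N₀ le_rfl k hk)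
      have hb := (S4.path_lb hΩ hφ2 hneg hU hΩU hψ2 hpsh hψnn hc₀pos.le hc₀ hCD hm).1
      rw [h0, h1] at hb
      have h2 : S4.hatF φ (x k) - S4.hatF φ (x N₀) ≤ pathLen H γ :=
        (le_abs_self _).trans hb
      linarith
    set C : ℝ := (Finset.range (N₀+1)).sup' Finset.nonempty_range_add_one
      (fun k => S4.hatF φ (x k)) ⊔ (S4.hatF φ (x N₀) + 1) with hCdef
    have hC : ∀ k, S4.hatF φ (x k) ≤ C := by
      intro k
      rcases le_or_gt k N₀ with h | h
      · exact le_sup_of_le_left (Finset.le_sup' (fun k => S4.hatF φ (x k))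
          (Finset.mem_range.2 (by omega)))
      · exact le_sup_of_le_right (hhatb k h.le)
    have hexp : ∀ k, φ (x k) ≤ -Real.exp (-C) := by
      intro k
      have h1 : -Real.log (-(φ (x k))) ≤ C := hC k
      have h2 : (0:ℝ) < -(φ (x k)) := by linarith [hneg _ (hx k)]
      have h4 : Real.exp (-C) ≤ -(φ (x k)) :=
        (Real.le_log_iff_exp_le h2).1 (by linarith)
      linarith
    -- Euclidean Cauchy
    have hcs : CauchySeq x := by
      rw [Metric.cauchySeq_iff]
      intro δ hδ
      have hε : 0 < Real.sqrt c₀ * δ := mul_pos (Real.sqrt_pos.2 hc₀pos) hδ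
      obtain ⟨N, hN⟩ := hcauchy _ hε
      refine ⟨N, fun j hj k hk => ?_⟩
      obtain ⟨γ, hCD, h0, h1, hm, hlen⟩ := hpath j k _ hε (hN j hj k hk)
      have hb := (S4.path_lb hΩ hφ2 hneg hU hΩU hψ2 hpsh hψnn hc₀pos.le hc₀ hCD hm).2
      rw [h0, h1] at hb
      have h2 : Real.sqrt c₀ * ‖x k - x j‖ < Real.sqrt c₀ * δ := lt_of_le_of_lt hb hlen
      have h3 : ‖x k - x j‖ < δ :=
        lt_of_mul_lt_mul_left h2 (Real.sqrt_nonneg _)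
      rw [dist_eq_norm, norm_sub_rev]
      exact h3
    obtain ⟨l, hl⟩ := cauchySeq_tendsto_of_complete hcs
    have hlK : l ∈ {z | z ∈ Ω ∧ φ z ≤ -Real.exp (-C)} :=
      (hlim _ (Real.exp_pos _)).mem_of_tendsto hl
        (Filter.Eventually.of_forall (fun k => ⟨hx k, hexp k⟩))
    have hlΩ : l ∈ Ω := hlK.1
    obtain ⟨r, hr, M, hM⟩ := S4.seg_ub hΩ hφ2 hneg hU hΩU hψ2 hn hlΩ
    refine ⟨l, hlΩ, ?_⟩
    have hub : ∀ᶠ k in Filter.atTop, wDist Ω H (x k) l ≤ M * ‖x k - l‖ := by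
      filter_upwards [hl (Metric.closedBall_mem_nhds l hr)] with k hk
      exact hM (x k) hk
    have hlb : ∀ᶠ k in Filter.atTop, 0 ≤ wDist Ω H (x k) l :=
      Filter.Eventually.of_forall (fun k => S4.wDist_nonneg Ω H (x k) l)
    have hnorm : Filter.Tendsto (fun k => M * ‖x k - l‖) Filter.atTop (nhds 0) := by
      have h0 : Filter.Tendsto (fun k => ‖x k - l‖) Filter.atTop (nhds 0) :=
        tendsto_iff_norm_sub_tendsto_zero.1 hl
      simpa using h0.const_mul M
    exact tendsto_of_tendsto_of_tendsto_of_le_of_le' tendsto_const_nhds hnorm hlb hub
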